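/- Let p be a probability distribution on ℕ with p_i > 0 for all i. Then the Bayes blind spot BS(p) is dense in S with respect to the topology on S induced by the ℓ¹-norm. -/

import Mathlib

/-- The set of probability distributions on `ℕ`, as a subset of the Banach space `ℓ¹`. -/
def S : Set (lp (fun _ : ℕ => ℝ) 1) :=
  {q | (∀ i, 0 ≤ q i) ∧ HasSum (fun i => q i) 1}

/-- The Bayes blind spot of `p`, as a subset of `S` (with its ℓ¹-subspace topology). -/
def BS (p : ℕ → ℝ) : Set S := {q | Function.Injective fun i => q.1 i / p i}

/-! The segment from any `q ∈ S` to a fixed `w ∈ BS p` stays in `S` by convexity, and the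
ratios `i ↦ q_t i / p i` of its points are the affine interpolations of those of `q` and `w`.
Two of them coincide for at most one parameter `t`, since they differ at `t = 1`; so all but
countably many `t` give points of `BS p`, and such `t` accumulate at `0`, where the segment
starts at `q`. A point `w` exists: tilt `p` by the weights `2⁻ⁱ` and renormalise. -/

open Set Function AffineMap

theorem countable_setOf_not_injective_lineMap {ι 𝕜 : Type*} [Countable ι] [Field 𝕜]
    (f g : ι → 𝕜) (hg : Injective g) :
    {t : 𝕜 | ¬Injective fun i => lineMap (f i) (g i) t}.Countable := by
  refine (countable_range fun ij : ι × ι =>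
    (f ij.1 - f ij.2) / ((f ij.1 - f ij.2) - (g ij.1 - g ij.2))).mono ?_
  intro t ht
  simp only [Injective, not_forall, lineMap_apply_ring] at ht
  obtain ⟨i, j, hij, hne⟩ := ht
  have hden : (f i - f j) - (g i - g j) ≠ 0 := by
    intro h
    exact hne (hg (by linear_combination hij - (1 - t) * h))
  exact ⟨(i, j), by rw [div_eq_iff hden]; linear_combination hij⟩

theorem convex_S : Convex ℝ S := by
  intro x hx y hy a b ha hb hab
  simp only [S, mem_ofPred_eq, lp.coeFn_add, lp.coeFn_smul, Pi.add_apply, Pi.smul_apply,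
    smul_eq_mul]
  refine ⟨fun i => ?_, ?_⟩
  · exact add_nonneg (mul_nonneg ha (hx.1 i)) (mul_nonneg hb (hy.1 i))
  · simpa [hab] using (hx.2.mul_left a).add (hy.2.mul_left b)

theorem exists_mem_S_coe_eq {w : ℕ → ℝ} (h0 : ∀ i, 0 ≤ w i) (h1 : HasSum w 1) :
    ∃ x ∈ S, ⇑x = w := by
  have hw : Memℓp w 1 := memℓp_gen (by simpa using h1.summable.abs)
  exact ⟨⟨w, hw⟩, ⟨h0, h1⟩, rfl⟩

theorem BS_nonempty {p : ℕ → ℝ} (hpos : ∀ i, 0 < p i) (hsum : HasSum p 1) :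
    (BS p).Nonempty := by
  set u : ℕ → ℝ := fun i => (2⁻¹ : ℝ) ^ i * p i
  have hu_pos : ∀ i, 0 < u i := fun i => mul_pos (pow_pos (by norm_num) i) (hpos i)
  have hu : Summable u := hsum.summable.of_nonneg_of_le (fun i => (hu_pos i).le)
    fun i => mul_le_of_le_one_left (hpos i).le (pow_le_one₀ (by norm_num) (by norm_num))
  have hσ : 0 < ∑' i, u i := hu.tsum_pos (fun i => (hu_pos i).le) 0 (hu_pos 0)
  obtain ⟨w, hwS, hw⟩ := exists_mem_S_coe_eq (w := fun i => u i / ∑' i, u i)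
    (fun i => div_nonneg (hu_pos i).le hσ.le)
    (by simpa [hσ.ne'] using hu.hasSum.div_const (∑' i, u i))
  refine ⟨⟨w, hwS⟩, fun i j hij => ?_⟩
  have hratio : ∀ k, w k / p k = (2⁻¹ : ℝ) ^ k / ∑' i, u i := fun k => by
    rw [hw, div_right_comm, mul_div_assoc, div_self (hpos k).ne', mul_one]
  simp only [hratio, div_left_inj' hσ.ne'] at hij
  exact (pow_right_strictAnti₀ (by norm_num) (by norm_num)).injective hij

theorem lineMap_apply_div (p : ℕ → ℝ) (q w : lp (fun _ : ℕ => ℝ) 1) (t : ℝ) (i : ℕ) :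
    lineMap q w t i / p i = lineMap (q i / p i) (w i / p i) t := by
  simp only [lineMap_apply_module, lp.coeFn_add, lp.coeFn_smul,
    Pi.add_apply, Pi.smul_apply, smul_eq_mul]
  ring

theorem mem_closure_BS {p : ℕ → ℝ} {w : S} (hw : w ∈ BS p) {q : lp (fun _ : ℕ => ℝ) 1}
    (hq : q ∈ S) : q ∈ closure (Subtype.val '' BS p) := by
  set T := {t : ℝ | ¬Injective fun i => lineMap (q i / p i) (w.1 i / p i) t}
  have hT : T.Countable := countable_setOf_not_injective_lineMap _ _ hw
  have h0 : (0 : ℝ) ∈ closure (Ioo 0 1 ∩ Tᶜ) := by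
    refine closure_minimal ((hT.dense_compl ℝ).open_subset_closure_inter isOpen_Ioo)
      isClosed_closure ?_
    simp [closure_Ioo zero_ne_one]
  have hmaps : MapsTo (lineMap q w.1) (Ioo 0 1 ∩ Tᶜ) (Subtype.val '' BS p) :=
    fun t ⟨ht, htT⟩ => ⟨⟨_, convex_S.lineMap_mem hq w.2 (Ioo_subset_Icc_self ht)⟩,
      by simpa [BS, lineMap_apply_div, T] using htT, rfl⟩
  simpa using map_mem_closure lineMap_continuous h0 hmaps

/-- For a probability distribution `p` on `ℕ` with all components positive,
the Bayes blind spot `BS(p)` is dense in `S` for the ℓ¹-topology. -/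
theorem bayes_blind_spot_dense (p : ℕ → ℝ)
    (hpos : ∀ i, 0 < p i) (hsum : HasSum p 1) :
    Dense (BS p) := by
  obtain ⟨w, hw⟩ := BS_nonempty hpos hsum
  exact Subtype.dense_iff.2 fun _ hq => mem_closure_BS hw hq
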